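/- arXiv:1708.05333 — 7 statements merged into one kernel-verified Lean document; each statement's English description precedes it below -/
import Mathlib

section
/- The map φ₂φ₃ from Z4 + uZ4 to F2⁴ defined by φ₂φ₃(a + ub) = (b₂, b₁ + b₂, c₂, c₁ + c₂), where b = b₁ + 2b₂ and c = a + b = c₁ + 2c₂ are the binary expansions (b₁, b₂, c₁, c₂ ∈ {0,1}), is weight preserving from (Z4 + uZ4, Lee weight) to (F2⁴, Hamming weight): for every x = a + ub in Z4 + uZ4, the Hamming weight of φ₂φ₃(x) equals w_L(x) = w_L(b) + w_L(a + b). -/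
/-- The Lee weight on `Z/4Z`: `w_L(x) = min(x̄, 4 - x̄)`. -/
def leeZ4 (x : ZMod 4) : ℕ := min x.val (4 - x.val)

/-- The Lee weight on `Z₄ + uZ₄`: `w_L(a + ub) = w_L(b) + w_L(a + b)`. -/
def leeR4 (x : DualNumber (ZMod 4)) : ℕ := leeZ4 x.snd + leeZ4 (x.fst + x.snd)

/-- The `i`-th bit (`i = 0, 1`) of the binary expansion `x̄ = x₁ + 2x₂` of `x ∈ Z/4Z`,
viewed in `F₂`. Here `bit4 x 0 = x₁` and `bit4 x 1 = x₂`. -/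
def bit4 (x : ZMod 4) (i : ℕ) : ZMod 2 := ((x.val / 2 ^ i) % 2 : ℕ)

/-- The map `φ₂φ₃ : Z₄ + uZ₄ → F₂⁴`, `a + ub ↦ (b₂, b₁ + b₂, c₂, c₁ + c₂)` where
`b = b₁ + 2b₂` and `c = a + b = c₁ + 2c₂` are binary expansions. -/
def phi23 (x : DualNumber (ZMod 4)) : Fin 4 → ZMod 2 :=
  ![bit4 x.snd 1, bit4 x.snd 0 + bit4 x.snd 1,
    bit4 (x.fst + x.snd) 1, bit4 (x.fst + x.snd) 0 + bit4 (x.fst + x.snd) 1]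

/-- `φ₂φ₃` is weight preserving from `(Z₄ + uZ₄, Lee weight)` to
`(F₂⁴, Hamming weight)`. -/
theorem phi23_weight_preserving (x : DualNumber (ZMod 4)) :
    hammingNorm (phi23 x) = leeR4 x := by
  obtain ⟨a, b⟩ := x
  fin_cases a <;> fin_cases b <;> decide
end

section
/- Define φ₄ : Z4 + uZ4 → F2⁸ by φ₄(a + ub) = (b₂, b₂+b₁, b₂+a₂, b₂+a₂+b₁, b₂+a₁, b₂+a₁+b₁, b₂+a₁+a₂, b₂+a₁+a₂+b₁), where a = a₁ + 2a₂ and b = b₁ + 2b₂ are binary expansions. Then φ₄ is weight preserving from (Z4 + uZ4, homogeneous weight with Γ = 4) to (F2⁸, Hamming weight): for every x ∈ Z4 + uZ4, the Hamming weight of φ₄(x) equals 0 if x = 0, equals 8 if x = 2u, and equals 4 otherwise. -/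
/-- The map `φ₄ : Z₄ + uZ₄ → F₂⁸` given by
`φ₄(a + ub) = (b₂, b₂+b₁, b₂+a₂, b₂+a₂+b₁, b₂+a₁, b₂+a₁+b₁, b₂+a₁+a₂, b₂+a₁+a₂+b₁)`
where `a = a₁ + 2a₂` and `b = b₁ + 2b₂` are binary expansions. -/
def phi4 (x : DualNumber (ZMod 4)) : Fin 8 → ZMod 2 :=
  let a1 := bit4 x.fst 0
  let a2 := bit4 x.fst 1
  let b1 := bit4 x.snd 0
  let b2 := bit4 x.snd 1
  ![b2, b2 + b1, b2 + a2, b2 + a2 + b1, b2 + a1, b2 + a1 + b1,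
    b2 + a1 + a2, b2 + a1 + a2 + b1]

instance : DecidableEq (DualNumber (ZMod 4)) :=
  inferInstanceAs (DecidableEq (ZMod 4 × ZMod 4))

/-- `φ₄` is weight preserving from `(Z₄ + uZ₄, homogeneous weight with Γ = 4)` to
`(F₂⁸, Hamming weight)`: the Hamming weight of `φ₄ x` is `0` if `x = 0`, `8` if
`x = 2u`, and `4` otherwise. -/
theorem phi4_weight_preserving (x : DualNumber (ZMod 4)) :
    hammingNorm (phi4 x) =
      if x = 0 then 0 else if x = 2 * DualNumber.eps then 8 else 4 := by
  revert x; exact fun x => by obtain ⟨a,b⟩ := x; revert a b; decide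
end

section
/- Define χ : Z4 + uZ4 → ℂ by χ(a + ub) = i^{ā + b̄}, where ā, b̄ ∈ {0,1,2,3} are the canonical representatives of a, b ∈ Z/4Z and i is the imaginary unit. Then χ is a well-defined additive character (χ(x + y) = χ(x)χ(y) for all x, y, and χ takes values in the unit circle), and χ is a generating character: its kernel {x : χ(x) = 1} contains no nonzero ideal of Z4 + uZ4, i.e., for every nonzero ideal I there exists x ∈ I with χ(x) ≠ 1. Consequently Z4 + uZ4 is a Frobenius ring. -/
/-!
Writing `x = a + ub`, `χ(x) = ψ(a) ψ(b)` with `ψ(a) = i^ā`, and `ψ` is additive on `ℤ/4ℤ` because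
`i⁴ = 1`; all values are powers of `i`, hence of norm one.  The ring `Z₄ + uZ₄` has the unique minimal
ideal `(2u)`: every nonzero element has a multiple equal to `2u`.  So every nonzero ideal contains
`2u`, and `χ(2u) = i² = -1`.
-/

/-- The character `χ : Z₄ + uZ₄ → ℂ`, `a + ub ↦ i^{ā + b̄}`, where `ā, b̄ ∈ {0,1,2,3}`
are canonical representatives. -/
noncomputable def chi4 (x : DualNumber (ZMod 4)) : ℂ :=
  Complex.I ^ (x.fst.val + x.snd.val)

open TrivSqZeroExt

theorem ZMod.pow_val_add {M : Type*} [Monoid M] {n : ℕ} [NeZero n] {ζ : M} (hζ : ζ ^ n = 1)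
    (a b : ZMod n) : ζ ^ (a + b).val = ζ ^ a.val * ζ ^ b.val := by
  rw [ZMod.val_add, ← pow_eq_pow_mod _ hζ, pow_add]

theorem chi4_add (x y : DualNumber (ZMod 4)) : chi4 (x + y) = chi4 x * chi4 y := by
  simp only [chi4, fst_add, snd_add, pow_add, ZMod.pow_val_add Complex.I_pow_four]
  ring

theorem norm_chi4 (x : DualNumber (ZMod 4)) : ‖chi4 x‖ = 1 := by
  rw [chi4, norm_pow, Complex.norm_I, one_pow]

theorem chi4_inr_two : chi4 (inr 2) = -1 := by
  rw [chi4, fst_inr, snd_inr, ZMod.val_zero, zero_add,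
    show ZMod.val (2 : ZMod 4) = 2 from rfl, Complex.I_sq]

theorem exists_mul_eq_inr_two {x : DualNumber (ZMod 4)} (hx : x ≠ 0) :
    ∃ r, r * x = inr 2 := by
  -- `(c + ud)(a + ub) = ca + u(cb + da)`
  have key : ∀ a b : ZMod 4, (a, b) ≠ (0, 0) →
      ∃ c d : ZMod 4, c * a = 0 ∧ c * b + d * a = 2 := by
    decide
  obtain ⟨c, d, hfst, hsnd⟩ := key x.fst x.snd (by simpa [TrivSqZeroExt.ext_iff] using hx)
  exact ⟨inl c + inr d, by ext <;> simp [hfst, hsnd]⟩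

theorem inr_two_mem_of_ne_bot {I : Ideal (DualNumber (ZMod 4))} (hI : I ≠ ⊥) : inr 2 ∈ I := by
  obtain ⟨x, hxI, hx⟩ := Submodule.exists_mem_ne_zero_of_ne_bot hI
  obtain ⟨r, hr⟩ := exists_mul_eq_inr_two hx
  exact hr ▸ I.mul_mem_left r hxI

/-- `χ(a + ub) = i^{ā + b̄}` is an additive character of `Z₄ + uZ₄` with values on the
unit circle, and it is a generating character: every nonzero ideal contains an element
`x` with `χ(x) ≠ 1`.  Consequently `Z₄ + uZ₄` is a Frobenius ring. -/
theorem chi4_generating_character :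
    (∀ x y : DualNumber (ZMod 4), chi4 (x + y) = chi4 x * chi4 y) ∧
      (∀ x : DualNumber (ZMod 4), ‖chi4 x‖ = 1) ∧
      (∀ I : Ideal (DualNumber (ZMod 4)), I ≠ ⊥ → ∃ x ∈ I, chi4 x ≠ 1) :=
  ⟨chi4_add, norm_chi4, fun _ hI =>
    ⟨inr 2, inr_two_mem_of_ne_bot hI, by rw [chi4_inr_two]; norm_num⟩⟩
end

section
/- In the ring R = Z4 + uZ4, the principal ideal ⟨2u⟩ equals {0, 2u} and is the unique minimal nonzero ideal of R: every nonzero ideal of R contains the element 2u. -/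
instance inst_s14 : DecidableEq (DualNumber (ZMod 4)) :=
  inferInstanceAs (DecidableEq (ZMod 4 × ZMod 4))

instance : Fintype (DualNumber (ZMod 4)) :=
  inferInstanceAs (Fintype (ZMod 4 × ZMod 4))

/-- In `Z₄ + uZ₄` the principal ideal `⟨2u⟩` equals `{0, 2u}` and is the unique minimal
nonzero ideal: every nonzero ideal contains `2u`. -/
theorem z4u_minimal_ideal :
    ((Ideal.span {2 * DualNumber.eps} : Ideal (DualNumber (ZMod 4))) :
        Set (DualNumber (ZMod 4))) = {0, 2 * DualNumber.eps} ∧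
      ∀ I : Ideal (DualNumber (ZMod 4)), I ≠ ⊥ → 2 * DualNumber.eps ∈ I := by
  constructor
  · ext x
    simp only [SetLike.mem_coe, Ideal.mem_span_singleton', Set.mem_insert_iff,
      Set.mem_singleton_iff]
    revert x
    decide
  · intro I hI
    obtain ⟨x, hxI, hx⟩ := Submodule.exists_mem_ne_zero_of_ne_bot hI
    obtain ⟨r, hr⟩ :=
      (by decide : ∀ x : DualNumber (ZMod 4), x ≠ 0 → ∃ r, r * x = 2 * DualNumber.eps) x hx
    exact hr ▸ I.mul_mem_left r hxI
end

section
/- The ring R = Z4 + uZ4 is a non-chain, non-principal ideal ring: the ideals ⟨2⟩ and ⟨u⟩ are incomparable under inclusion (neither contains the other), and the maximal ideal ⟨2, u⟩ is not a principal ideal. -/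
private lemma dn_snd_mul (x y : DualNumber (ZMod 4)) :
    (x*y).snd = x.fst * y.snd + y.fst * x.snd := by
  simp [TrivSqZeroExt.snd_mul, smul_eq_mul, MulOpposite.smul_eq_mul_unop, mul_comm]

private lemma dn_fst_two : (2 : DualNumber (ZMod 4)).fst = 2 := by
  rw [← one_add_one_eq_two, TrivSqZeroExt.fst_add, TrivSqZeroExt.fst_one, one_add_one_eq_two]

private lemma dn_snd_two : (2 : DualNumber (ZMod 4)).snd = 0 := by
  rw [← one_add_one_eq_two, TrivSqZeroExt.snd_add, TrivSqZeroExt.snd_one, add_zero]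

private lemma aux1 : ∀ t : ZMod 4, 2 * t ≠ 1 := by decide

private lemma aux2 : ∀ A C D E G : ZMod 4, 2 * A * C = 2 → 2 * A * D = 0 →
    2 * A * E + D * G = 1 → False := by decide

/-- `Z₄ + uZ₄` is a non-chain, non-principal ideal ring: the ideals `⟨2⟩` and `⟨u⟩` are
incomparable under inclusion, and the maximal ideal `⟨2, u⟩` is not principal. -/
theorem z4u_nonchain_nonprincipal :
    ¬ (Ideal.span {(2 : DualNumber (ZMod 4))} ≤ Ideal.span {DualNumber.eps}) ∧
      ¬ (Ideal.span {(DualNumber.eps : DualNumber (ZMod 4))} ≤ Ideal.span {2}) ∧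
      ¬ (Ideal.span {(2 : DualNumber (ZMod 4)), DualNumber.eps}).IsPrincipal := by
  refine ⟨?_, ?_, ?_⟩
  · intro h
    have h2 : (2 : DualNumber (ZMod 4)) ∈ Ideal.span {(DualNumber.eps : DualNumber (ZMod 4))} :=
      h (Ideal.subset_span rfl)
    obtain ⟨c, hc⟩ := Ideal.mem_span_singleton.mp h2
    have := congrArg TrivSqZeroExt.fst hc
    rw [dn_fst_two, TrivSqZeroExt.fst_mul, DualNumber.fst_eps, zero_mul] at this
    exact absurd this (by decide)
  · intro h
    have h2 : (DualNumber.eps : DualNumber (ZMod 4)) ∈ Ideal.span {(2 : DualNumber (ZMod 4))} :=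
      h (Ideal.subset_span rfl)
    obtain ⟨c, hc⟩ := Ideal.mem_span_singleton.mp h2
    have := congrArg TrivSqZeroExt.snd hc
    rw [DualNumber.snd_eps, dn_snd_mul, dn_fst_two, dn_snd_two, mul_zero, add_zero] at this
    exact absurd this.symm (aux1 c.snd)
  · rintro ⟨g, hg⟩
    -- 2 ∈ span {g}
    have h2 : (2 : DualNumber (ZMod 4)) ∈ Ideal.span {g} :=
      hg.le (Ideal.subset_span (by simp))
    have heps : (DualNumber.eps : DualNumber (ZMod 4)) ∈ Ideal.span {g} :=
      hg.le (Ideal.subset_span (by simp))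
    have hgmem : g ∈ Ideal.span {(2 : DualNumber (ZMod 4)), DualNumber.eps} :=
      hg.ge (Ideal.subset_span rfl)
    obtain ⟨c, hc⟩ := Ideal.mem_span_singleton.mp h2
    obtain ⟨d, hd⟩ := Ideal.mem_span_singleton.mp heps
    obtain ⟨a, b, hab⟩ := Ideal.mem_span_pair.mp hgmem
    -- fst of g is 2 * a.fst
    have hgf : g.fst = 2 * a.fst := by
      have := congrArg TrivSqZeroExt.fst hab
      rw [TrivSqZeroExt.fst_add, TrivSqZeroExt.fst_mul, TrivSqZeroExt.fst_mul, dn_fst_two,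
        DualNumber.fst_eps, mul_zero, add_zero, mul_comm] at this
      exact this.symm
    have e1 : 2 * a.fst * c.fst = 2 := by
      have := congrArg TrivSqZeroExt.fst hc
      rw [dn_fst_two, TrivSqZeroExt.fst_mul, hgf] at this
      exact this.symm
    have e2 : 2 * a.fst * d.fst = 0 := by
      have := congrArg TrivSqZeroExt.fst hd
      rw [DualNumber.fst_eps, TrivSqZeroExt.fst_mul, hgf] at this
      exact this.symm
    have e3 : 2 * a.fst * d.snd + d.fst * g.snd = 1 := by
      have := congrArg TrivSqZeroExt.snd hd
      rw [DualNumber.snd_eps, dn_snd_mul, hgf] at this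
      exact this.symm
    exact aux2 a.fst c.fst d.fst d.snd g.snd e1 e2 e3
end

section
/- Let r ≥ 1 and let R = Z_{2^r} + uZ_{2^r} (dual numbers over Z/2^rZ, u² = 0). For every real number Γ ≥ 0, the function w : R → ℝ defined by w(x) = 0 if x = 0, w(x) = 2Γ if x = 2^{r−1}u, and w(x) = Γ otherwise, is a homogeneous weight on R with average value Γ. -/
/-!
The element `m = 2^(r-1) u` lies in every nonzero principal ideal of `R`, and `Rm = {0, m}`:
in `ℤ/2^r` every nonzero `a` divides `2^(r-1)`, and `2^(r-1)` is killed by `2`. Hence each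
nonzero ideal `Rx` contains both `0` and `m`, and the weight `Γ` missing at `0` is made up by
the extra `Γ` at `m`, so the sum over `Rx` is `Γ |Rx|`. Invariance under change of generator holds
because `x = 0` and `x = m` are both properties of the ideal `Rx`.
-/

/-- A weight function `w : R → ℝ` on a finite commutative ring is *homogeneous with
average value `Γ`* if (i) `w` is constant on generators of the same principal ideal, and
(ii) for every nonzero `x`, the sum of `w` over the principal ideal `Rx` equals
`Γ` times the cardinality of `Rx`. -/
def IsHomogeneousWeight {R : Type*} [CommRing R] [Finite R] (w : R → ℝ) (Γ : ℝ) : Prop :=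
  (∀ x y : R, Ideal.span {x} = Ideal.span {y} → w x = w y) ∧
  (∀ x : R, x ≠ 0 →
    ∑ᶠ y ∈ (Ideal.span {x} : Ideal R) , w y =
      Γ * (Nat.card (Ideal.span {x} : Ideal R) : ℝ))

instance (r : ℕ) : Finite (DualNumber (ZMod (2 ^ r))) :=
  inferInstanceAs (Finite (ZMod (2 ^ r) × ZMod (2 ^ r)))

open TrivSqZeroExt DualNumber

lemma finsum_mem_ite_eq_mul_ncard {α : Type*} [DecidableEq α] {s : Set α} (hs : s.Finite)
    {a b : α} (ha : a ∈ s) (hb : b ∈ s) (hab : a ≠ b) (Γ : ℝ) :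
    ∑ᶠ y ∈ s, (if y = a then 0 else if y = b then 2 * Γ else Γ) = Γ * s.ncard := by
  rw [finsum_mem_eq_finite_toFinset_sum _ hs, Set.ncard_eq_toFinset_card _ hs]
  calc ∑ y ∈ hs.toFinset, (if y = a then 0 else if y = b then 2 * Γ else Γ)
      = ∑ y ∈ hs.toFinset, (Γ + ((if y = b then Γ else 0) - if y = a then Γ else 0)) := by
        refine Finset.sum_congr rfl fun y _ => ?_
        split_ifs <;> simp_all [two_mul]
    _ = Γ * hs.toFinset.card := by
        rw [Finset.sum_add_distrib, Finset.sum_sub_distrib, Finset.sum_const, Finset.sum_ite_eq',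
          Finset.sum_ite_eq', if_pos (hs.mem_toFinset.2 ha), if_pos (hs.mem_toFinset.2 hb)]
        simp [mul_comm]

theorem isHomogeneousWeight_of_minimal_span_pair {R : Type*} [CommRing R] [Finite R]
    [DecidableEq R] {m : R} (hm : m ≠ 0) (hm_mem : ∀ x, x ≠ 0 → m ∈ Ideal.span {x})
    (hspan : ∀ y ∈ Ideal.span {m}, y = 0 ∨ y = m) (Γ : ℝ) :
    IsHomogeneousWeight (fun x : R => if x = 0 then 0 else if x = m then 2 * Γ else Γ) Γ := by
  have eq_m_iff (x : R) : x = m ↔ Ideal.span {x} = Ideal.span {m} := by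
    refine ⟨fun h => h ▸ rfl, fun h => ?_⟩
    rcases hspan x (h ▸ Ideal.mem_span_singleton_self x) with rfl | rfl
    · exact absurd (Ideal.span_singleton_eq_bot.1 (by simpa using h.symm)) hm
    · rfl
  refine ⟨fun x y hxy => ?_, fun x hx => ?_⟩
  · simp only [← Ideal.span_singleton_eq_bot, eq_m_iff, hxy]
  · rw [← SetLike.coe_sort_coe, Nat.card_coe_set_eq]
    exact finsum_mem_ite_eq_mul_ncard (Set.toFinite _) (Ideal.zero_mem _) (hm_mem x hx) hm.symm Γ

theorem ZMod.pow_pred_mem_span_singleton {p r : ℕ} (hp : p.Prime) {a : ZMod (p ^ r)}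
    (ha : a ≠ 0) : (p : ZMod (p ^ r)) ^ (r - 1) ∈ Ideal.span {a} := by
  obtain ⟨k, hkr, hk⟩ := (Nat.dvd_prime_pow hp).1 (Nat.gcd_dvd_right a.val (p ^ r))
  have hk_dvd : p ^ k ∣ a.val := hk ▸ Nat.gcd_dvd_left _ _
  have hkr' : k ≤ r - 1 := by
    refine Nat.le_pred_of_lt (hkr.lt_of_ne ?_)
    rintro rfl
    have : NeZero (p ^ k) := ⟨pow_ne_zero _ hp.ne_zero⟩
    exact ha ((ZMod.val_eq_zero a).1 (Nat.eq_zero_of_dvd_of_lt hk_dvd (ZMod.val_lt a)))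
  have ha_dvd : a ∣ (p : ZMod (p ^ r)) ^ k := by
    have hgcd := ZMod.mul_inv_eq_gcd a
    rw [hk, Nat.cast_pow] at hgcd
    exact Dvd.intro _ hgcd
  exact Ideal.mem_span_singleton.2 (ha_dvd.trans (pow_dvd_pow _ hkr'))

lemma natCast_mul_eq_zero_or_eq_self {R : Type*} [Semiring R] {t : R} (ht : 2 * t = 0) (k : ℕ) :
    (k : R) * t = 0 ∨ (k : R) * t = t := by
  obtain ⟨j, rfl | rfl⟩ := Nat.even_or_odd' k
  · left
    rw [mul_comm 2 j, Nat.cast_mul, Nat.cast_two, mul_assoc, ht, mul_zero]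
  · right
    rw [Nat.cast_add_one, mul_comm 2 j, Nat.cast_mul, Nat.cast_two, add_mul, mul_assoc, ht,
      mul_zero, zero_add, one_mul]

namespace DualNumber

variable {K : Type*} [CommRing K] {t : K}

lemma inr_mem_span_singleton (ht : ∀ a : K, a ≠ 0 → t ∈ Ideal.span {a}) {x : K[ε]}
    (hx : x ≠ 0) : inr t ∈ Ideal.span {x} := by
  rw [Ideal.mem_span_singleton]
  by_cases hfst : x.fst = 0
  · have hsnd : x.snd ≠ 0 := fun h => hx (TrivSqZeroExt.ext hfst h)
    obtain ⟨c, rfl⟩ := Ideal.mem_span_singleton.1 (ht _ hsnd)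
    exact ⟨inl c, TrivSqZeroExt.ext (by simp [hfst]) (by simp [hfst])⟩
  · obtain ⟨c, rfl⟩ := Ideal.mem_span_singleton.1 (ht _ hfst)
    exact ⟨inr c, TrivSqZeroExt.ext (by simp) (by simp [mul_comm])⟩

lemma eq_zero_or_eq_inr_of_mem_span_singleton (ht : ∀ c : K, c * t = 0 ∨ c * t = t)
    {y : K[ε]} (hy : y ∈ Ideal.span {inr t}) : y = 0 ∨ y = inr t := by
  obtain ⟨c, rfl⟩ := Ideal.mem_span_singleton.1 hy
  rcases ht c.fst with h | h
  · exact Or.inl (TrivSqZeroExt.ext (by simp) (by simpa [mul_comm] using h))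
  · exact Or.inr (TrivSqZeroExt.ext (by simp) (by simpa [mul_comm] using h))

end DualNumber

open scoped Classical in
theorem z2ru_homogeneous_weight_general (r : ℕ) (hr : 1 ≤ r) (Γ : ℝ) :
    IsHomogeneousWeight
      (fun x : DualNumber (ZMod (2 ^ r)) =>
        if x = 0 then 0
        else if x = (2 ^ (r - 1) : DualNumber (ZMod (2 ^ r))) * DualNumber.eps then 2 * Γ
        else Γ) Γ := by
  set t : ZMod (2 ^ r) := 2 ^ (r - 1)
  have h_eps : (2 ^ (r - 1) : DualNumber (ZMod (2 ^ r))) * eps = inr t := by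
    ext
    · simp
    · simp [fst_pow]
      rfl
  have ht : t ≠ 0 := by
    rw [show t = ((2 ^ (r - 1) : ℕ) : ZMod (2 ^ r)) by simp [t], Ne, ZMod.natCast_eq_zero_iff,
      Nat.pow_dvd_pow_iff_le_right (by norm_num)]
    omega
  have h_two_mul : 2 * t = 0 := by
    rw [← pow_succ', Nat.sub_add_cancel hr]
    exact_mod_cast ZMod.natCast_self (2 ^ r)
  simp only [h_eps]
  refine isHomogeneousWeight_of_minimal_span_pair ((inr_injective.ne ht).trans_eq (inr_zero _))
    (fun x hx => inr_mem_span_singleton (fun a ha => ?_) hx)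
    (fun y hy => eq_zero_or_eq_inr_of_mem_span_singleton (fun c => ?_) hy) Γ
  · simpa [t] using ZMod.pow_pred_mem_span_singleton Nat.prime_two ha
  · rw [← ZMod.natCast_zmod_val c]
    exact natCast_mul_eq_zero_or_eq_self h_two_mul c.val

open scoped Classical in
/-- For `r ≥ 1`, `R = Z_{2^r} + uZ_{2^r}` and every `Γ ≥ 0`, the function given by
`w 0 = 0`, `w (2^{r-1}u) = 2Γ` and `w x = Γ` otherwise is a homogeneous weight on `R`
with average value `Γ`. -/
theorem z2ru_homogeneous_weight (r : ℕ) (hr : 1 ≤ r) (Γ : ℝ) (hΓ : 0 ≤ Γ) :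
    IsHomogeneousWeight
      (fun x : DualNumber (ZMod (2 ^ r)) =>
        if x = 0 then 0
        else if x = (2 ^ (r - 1) : DualNumber (ZMod (2 ^ r))) * DualNumber.eps then 2 * Γ
        else Γ) Γ :=
  z2ru_homogeneous_weight_general r hr Γ
end

section
/- Carlet's generalized Gray map is an isometry in the following sense: let r ≥ 2 and let x ∈ Z/2^rZ have binary expansion x̄ = x₁ + 2x₂ + ⋯ + 2^{r−1}x_r with x₁, …, x_r ∈ {0,1}. Then the number of points y = (y₁, …, y_{r−1}) ∈ F2^{r−1} at which the Boolean function f_x(y) = x_r + x₁y₁ + ⋯ + x_{r−1}y_{r−1} takes the value 1 (i.e., the Hamming weight of the image of x under the generalized Gray map) equals 0 if x = 0, equals 2^{r−1} if x = 2^{r−1}, and equals 2^{r−2} otherwise; that is, it equals the homogeneous weight of x on Z/2^rZ with average value Γ = 2^{r−2}. -/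
/-!
If the low bits `x₁, …, x_{r-1}` all vanish, i.e. `x ∈ {0, 2^{r-1}}`, then `f_x` is the
constant `x_r`. Otherwise `f_x` is a non-constant affine form on `F₂^{r-1}`, and such a form takes
every value equally often: its linear part is a surjective additive homomorphism, and all fibres
of a group homomorphism that are nonempty have the same size.
-/

/-- The `i`-th bit (zero-indexed) of the binary expansion of the canonical
representative of `x ∈ Z/2^rZ`, viewed in `F₂`.  With the paper's one-indexed
notation `x̄ = x₁ + 2x₂ + ⋯ + 2^{r-1}x_r`, we have `x_i = bit x (i - 1)`. -/
def bit {r : ℕ} (x : ZMod (2 ^ r)) (i : ℕ) : ZMod 2 := ((x.val / 2 ^ i) % 2 : ℕ)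

open Finset

theorem AddMonoidHom.card_fiber_mul_card_of_surjective {G M : Type*} [AddGroup G] [Fintype G]
    [AddMonoid M] [Fintype M] [DecidableEq M] (f : G →+ M) (hf : Function.Surjective f) (m : M) :
    #{g | f g = m} * Fintype.card M = Fintype.card G := by
  calc #{g | f g = m} * Fintype.card M = ∑ k : M, #{g | f g = k} := by
        rw [sum_congr rfl fun k _ ↦ AddMonoidHom.card_fiber_eq_of_mem_range f (hf k) (hf m),
          sum_const, card_univ, smul_eq_mul, mul_comm]
    _ = Fintype.card G := (card_eq_sum_card_fiberwise fun g _ ↦ mem_univ (f g)).symm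

theorem card_filter_affine_eq_mul_card {K ι : Type*} [Field K] [Fintype K] [DecidableEq K]
    [Fintype ι] [DecidableEq ι] {a : ι → K} (ha : a ≠ 0) (c b : K) :
    #{y : ι → K | c + ∑ i, a i * y i = b} * Fintype.card K =
      Fintype.card K ^ Fintype.card ι := by
  obtain ⟨j, hj⟩ := Function.ne_iff.1 ha
  let f : (ι → K) →+ K := AddMonoidHom.mk' (fun y ↦ ∑ i, a i * y i) fun y z ↦ by
    simp only [Pi.add_apply, mul_add, sum_add_distrib]
  have hf : Function.Surjective f := fun t ↦
    ⟨Pi.single j (t / a j), by simp [f, Pi.single_apply, mul_div_cancel₀ _ hj]⟩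
  have hfilter : univ.filter (fun y : ι → K ↦ c + ∑ i, a i * y i = b) =
      univ.filter (fun y ↦ f y = b - c) := by
    ext y
    simp [f, eq_sub_iff_add_eq, add_comm]
  rw [hfilter, f.card_fiber_mul_card_of_surjective hf, Fintype.card_fun]

theorem Nat.mod_two_pow_eq_zero_iff_testBit {v m : ℕ} :
    v % 2 ^ m = 0 ↔ ∀ i < m, v.testBit i = false := by
  constructor
  · intro h i hi
    simpa [h, hi] using (Nat.testBit_mod_two_pow v m i).symm
  · intro h
    refine Nat.zero_of_testBit_eq_false fun i ↦ ?_
    rw [Nat.testBit_mod_two_pow]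
    by_cases hi : i < m <;> simp [hi, h]

theorem Nat.mod_two_pow_eq_zero_iff_of_lt {v m : ℕ} (hv : v < 2 ^ (m + 1)) :
    v % 2 ^ m = 0 ↔ v = 0 ∨ v = 2 ^ m := by
  have hq : v / 2 ^ m < 2 := Nat.div_lt_of_lt_mul (by rwa [← pow_succ])
  constructor
  · intro h
    have hv := Nat.div_add_mod v (2 ^ m)
    interval_cases v / 2 ^ m <;> simp_all
  · rintro (rfl | rfl) <;> simp

theorem ZMod.val_two_pow_of_lt {n m : ℕ} (h : 2 ^ m < n) : ((2 : ZMod n) ^ m).val = 2 ^ m := by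
  rw [← Nat.cast_ofNat, ← Nat.cast_pow, ZMod.val_natCast_of_lt h]

theorem bit_eq_zero_iff {r : ℕ} (x : ZMod (2 ^ r)) (i : ℕ) :
    bit x i = 0 ↔ x.val.testBit i = false := by
  rw [bit, ← Nat.toNat_testBit]
  cases x.val.testBit i <;> decide

theorem forall_bit_eq_zero_iff {m : ℕ} (x : ZMod (2 ^ (m + 1))) :
    (∀ i < m, bit x i = 0) ↔ x = 0 ∨ x = 2 ^ m := by
  have hpow : ((2 : ZMod (2 ^ (m + 1))) ^ m).val = 2 ^ m :=
    ZMod.val_two_pow_of_lt (Nat.pow_lt_pow_succ one_lt_two)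
  have hx : x = 2 ^ m ↔ x.val = 2 ^ m :=
    ⟨fun h ↦ h ▸ hpow, fun h ↦ ZMod.val_injective _ (h.trans hpow.symm)⟩
  simp only [bit_eq_zero_iff, ← Nat.mod_two_pow_eq_zero_iff_testBit,
    Nat.mod_two_pow_eq_zero_iff_of_lt (ZMod.val_lt x), hx, ZMod.val_eq_zero]

theorem bit_two_pow_self (m : ℕ) : bit (2 ^ m : ZMod (2 ^ (m + 1))) m = 1 := by
  rw [bit, ZMod.val_two_pow_of_lt (Nat.pow_lt_pow_succ one_lt_two),
    Nat.div_self (by positivity)]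
  rfl

theorem gray_map_isometry_general (r : ℕ) (x : ZMod (2 ^ r)) :
    (Finset.univ.filter (fun y : Fin (r - 1) → ZMod 2 =>
        bit x (r - 1) + ∑ i : Fin (r - 1), bit x i * y i = 1)).card =
      if x = 0 then 0
      else if x = (2 ^ (r - 1) : ZMod (2 ^ r)) then 2 ^ (r - 1)
      else 2 ^ (r - 2) := by
  rcases r with _ | m
  · obtain rfl : x = 0 := (ZMod.val_eq_zero x).1 (by simpa using ZMod.val_lt x)
    simp [bit]
  rw [Nat.add_sub_cancel, show m + 1 - 2 = m - 1 by omega]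
  by_cases hx : x = 0 ∨ x = 2 ^ m
  · have hsum (y : Fin m → ZMod 2) : ∑ i : Fin m, bit x i * y i = 0 :=
      sum_eq_zero fun i _ ↦ by rw [(forall_bit_eq_zero_iff x).2 hx i i.isLt, zero_mul]
    simp only [hsum, add_zero]
    rcases hx with rfl | rfl
    · simp [bit]
    · have hne : (2 : ZMod (2 ^ (m + 1))) ^ m ≠ 0 := fun h ↦ by
        simpa [h] using (ZMod.val_two_pow_of_lt (Nat.pow_lt_pow_succ (n := m) one_lt_two)).symm
      simp [bit_two_pow_self, hne]
  · obtain ⟨i, hi, hbit⟩ : ∃ i < m, bit x i ≠ 0 := by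
      simpa using mt (forall_bit_eq_zero_iff x).1 hx
    have ha : (fun i : Fin m ↦ bit x i) ≠ 0 := fun h ↦ hbit (congrFun h ⟨i, hi⟩)
    have hcard := card_filter_affine_eq_mul_card ha (bit x m) 1
    rw [ZMod.card, Fintype.card_fin, ← pow_sub_one_mul (by omega : m ≠ 0)] at hcard
    rw [not_or] at hx
    rw [if_neg hx.1, if_neg hx.2]
    exact Nat.eq_of_mul_eq_mul_right two_pos hcard

/-- Carlet's generalized Gray map is an isometry: for `r ≥ 2` and `x ∈ Z/2^rZ` with
binary expansion `x̄ = x₁ + 2x₂ + ⋯ + 2^{r-1}x_r`, the number of points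
`y ∈ F₂^{r-1}` where the Boolean function `f_x(y) = x_r + x₁y₁ + ⋯ + x_{r-1}y_{r-1}`
takes the value `1` (the Hamming weight of the Gray image of `x`) equals `0` if
`x = 0`, equals `2^{r-1}` if `x = 2^{r-1}`, and equals `2^{r-2}` otherwise, i.e. it is
the homogeneous weight of `x` on `Z/2^rZ` with `Γ = 2^{r-2}`. -/
theorem gray_map_isometry (r : ℕ) (hr : 2 ≤ r) (x : ZMod (2 ^ r)) :
    (Finset.univ.filter (fun y : Fin (r - 1) → ZMod 2 =>
        bit x (r - 1) + ∑ i : Fin (r - 1), bit x i * y i = 1)).card =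
      if x = 0 then 0
      else if x = (2 ^ (r - 1) : ZMod (2 ^ r)) then 2 ^ (r - 1)
      else 2 ^ (r - 2) :=
  gray_map_isometry_general r x
end
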